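/- arXiv:0809.3420 — 3 statements merged into one kernel-verified Lean document; each statement's English description precedes it below -/
import Mathlib

section
/- Let H be a group generated by finitely many elements of finite order, and suppose the center Z(H) has finite index in H. Then H is finite. -/
/-!
A commutator `⁅a, b⁆` only depends on the cosets of `a` and `b` modulo the center, so a group
whose center has finite index has only finitely many commutators, and by Schur's theorem its
commutator subgroup is finite. The abelianization is finitely generated by elements of finite
order, hence finite. A group with a finite normal subgroup and finite quotient is finite.
-/

open scoped commutatorElement

namespace Subgroup

variable {G : Type*} [Group G]

theorem commutatorElement_mul_mem_center_left (a b : G) {z : G} (hz : z ∈ center G) :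
    ⁅a * z, b⁆ = ⁅a, b⁆ := by
  rw [commutatorElement_def, commutatorElement_def, mul_inv_rev, mul_assoc a z b,
    ← mem_center_iff.mp hz b]
  group

theorem commutatorElement_mul_mem_center_right (a b : G) {z : G} (hz : z ∈ center G) :
    ⁅a, b * z⁆ = ⁅a, b⁆ := by
  rw [← inv_inj, commutatorElement_inv, commutatorElement_inv,
    commutatorElement_mul_mem_center_left b a hz]

theorem finite_commutatorSet_of_finiteIndex_center [FiniteIndex (center G)] :
    Finite (commutatorSet G) := by
  let commutatorOfCosets : (G ⧸ center G) × (G ⧸ center G) → G :=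
    fun p => ⁅p.1.out, p.2.out⁆
  refine (Set.finite_range commutatorOfCosets).subset ?_
  rintro _ ⟨a, b, rfl⟩
  obtain ⟨z, hz⟩ := QuotientGroup.mk_out_eq_mul (center G) a
  obtain ⟨w, hw⟩ := QuotientGroup.mk_out_eq_mul (center G) b
  refine ⟨((a : G ⧸ center G), (b : G ⧸ center G)), ?_⟩
  simp only [commutatorOfCosets, hz, hw, commutatorElement_mul_mem_center_left _ _ z.2,
    commutatorElement_mul_mem_center_right _ _ w.2]

end Subgroup

theorem CommGroup.isMulTorsion_of_surjective {G A : Type*} [Group G] [CommGroup A]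
    {f : G →* A} (hf : Function.Surjective f) {S : Set G} (hgen : Subgroup.closure S = ⊤)
    (hS : ∀ s ∈ S, IsOfFinOrder s) : IsMulTorsion A := by
  intro a
  obtain ⟨g, rfl⟩ := hf a
  have hle : Subgroup.closure S ≤ (torsion A).comap f :=
    Subgroup.closure_le _ |>.mpr fun s hs => f.isOfFinOrder (hS s hs)
  exact hle (hgen ▸ Subgroup.mem_top g)

/-- A group generated by finitely many elements of finite order whose center
has finite index is finite. -/
theorem stmt_0 (H : Type*) [Group H] (S : Finset H)
    (hgen : Subgroup.closure (S : Set H) = ⊤)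
    (hord : ∀ s ∈ S, IsOfFinOrder s)
    (hZ : (Subgroup.center H).FiniteIndex) :
    Finite H := by
  have : Group.FG H := Group.fg_iff.mpr ⟨S, hgen, S.finite_toSet⟩
  have hof : Function.Surjective (Abelianization.of (G := H)) := QuotientGroup.mk_surjective
  have : Group.FG (Abelianization H) := Group.fg_of_surjective hof
  have : Finite (H ⧸ commutator H) :=
    CommGroup.finite_of_fg_isMulTorsion (Abelianization H)
      (CommGroup.isMulTorsion_of_surjective hof hgen hord)
  have : Finite (commutatorSet H) := Subgroup.finite_commutatorSet_of_finiteIndex_center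
  exact Finite.of_subgroup_quotient (commutator H)
end

section
/- Suppose integers 2 ≤ m₁, ..., m_r with r ≥ 3 satisfy Θ := -2 + Σᵢ(1 - 1/m_i) > 0, α := (8-t)/(4Θ) is a positive integer for some t ∈ {2,4,6}, and each m_i divides 2α. Then max_i m_i ≤ 3(10 - t). -/
/-!
Put `M = 2α`. Then `Θ M = (8 - t)/2`, and if `mᵢ d = M` then splitting off the `i`-th term
of `Θ` gives `d + (8 - t)/2 = M (Sᵢ - 1)`, where `Sᵢ = Σ_{k ≠ i} (1 - 1/m_k)`. Hence `Sᵢ > 1`,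
and a sum of at least two terms `1 - 1/m_k ≥ 1/2` exceeding `1` is at least `1/2 + 2/3 = 7/6`. So
`mᵢ d = M ≤ 6 (d + (8 - t)/2) ≤ (6 + 3 (8 - t)) d`, i.e. `mᵢ ≤ 3 (10 - t)`.
-/

open Finset

lemma one_sub_one_div_le_one_sub_one_div {k n : ℕ} (hk : 0 < k) (h : k ≤ n) :
    1 - 1 / (k : ℚ) ≤ 1 - 1 / (n : ℚ) := by
  have hk' : (0 : ℚ) < k := by exact_mod_cast hk
  have h' : (k : ℚ) ≤ n := by exact_mod_cast h
  linarith [one_div_le_one_div_of_le hk' h']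

section SumOneSubInv

variable {ι : Type*} (s : Finset ι) (m : ι → ℕ)

lemma card_div_two_le_sum_one_sub_one_div (hm : ∀ k ∈ s, 2 ≤ m k) :
    (s.card : ℚ) / 2 ≤ ∑ k ∈ s, (1 - 1 / (m k : ℚ)) := by
  have h := s.card_nsmul_le_sum _ (1 - 1 / ((2 : ℕ) : ℚ)) fun k hk =>
    one_sub_one_div_le_one_sub_one_div two_pos (hm k hk)
  rwa [nsmul_eq_mul, show (1 : ℚ) - 1 / ((2 : ℕ) : ℚ) = 1 / 2 by norm_num,
    ← div_eq_mul_one_div] at h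

lemma seven_div_six_le_sum_one_sub_one_div [DecidableEq ι] (hm : ∀ k ∈ s, 2 ≤ m k)
    (hs : 2 ≤ s.card) (h : 1 < ∑ k ∈ s, (1 - 1 / (m k : ℚ))) :
    7 / 6 ≤ ∑ k ∈ s, (1 - 1 / (m k : ℚ)) := by
  by_cases hbig : ∃ k ∈ s, 3 ≤ m k
  · obtain ⟨k, hk, h3⟩ := hbig
    rw [← sum_erase_add _ _ hk]
    have hrest := card_div_two_le_sum_one_sub_one_div (s.erase k) m
      fun j hj => hm j (mem_of_mem_erase hj)
    have hcard : (1 : ℚ) ≤ (s.erase k).card := by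
      rw [card_erase_of_mem hk]; exact_mod_cast (by omega : 1 ≤ s.card - 1)
    have hk3 : (2 / 3 : ℚ) ≤ 1 - 1 / (m k : ℚ) := by
      have := one_sub_one_div_le_one_sub_one_div three_pos h3
      norm_num at this ⊢
      linarith
    linarith
  · push Not at hbig
    have hsum : ∑ k ∈ s, (1 - 1 / (m k : ℚ)) = (s.card : ℚ) / 2 := by
      rw [sum_congr rfl fun k hk => by rw [show m k = 2 by linarith [hm k hk, hbig k hk]]]
      simp only [sum_const, nsmul_eq_mul]
      norm_num
      ring
    rw [hsum] at h ⊢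
    have h3 : 2 < s.card := by exact_mod_cast (by linarith : (2 : ℚ) < s.card)
    have : (3 : ℚ) ≤ s.card := by exact_mod_cast h3
    linarith

end SumOneSubInv

lemma mul_sum_erase_one_sub_one_div_sub_one {ι : Type*} [Fintype ι] [DecidableEq ι]
    (m : ι → ℕ) (i : ι) (M : ℚ) :
    M * (∑ k ∈ univ.erase i, (1 - 1 / (m k : ℚ)) - 1)
      = (-2 + ∑ k, (1 - 1 / (m k : ℚ))) * M + M / m i := by
  rw [← sum_erase_add _ _ (mem_univ i)]
  ring

lemma le_of_add_eq_mul_mul_sub_one {n d s S : ℚ} (hd : 1 ≤ d) (hs : 0 ≤ s) (hS : 7 / 6 ≤ S)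
    (h : d + s = n * d * (S - 1)) : n ≤ 6 + 6 * s := by
  by_contra! hn
  nlinarith [mul_le_mul_of_nonneg_left hS (by nlinarith : (0 : ℚ) ≤ n * d)]

/-- If `m₁, …, m_r ≥ 2` (`r ≥ 3`) satisfy `Θ = -2 + Σ(1 - 1/mᵢ) > 0`,
`α = (8-t)/(4Θ)` is a positive integer for some `t ∈ {2,4,6}`, and each `mᵢ`
divides `2α`, then every `mᵢ` is at most `3(10-t)`. -/
theorem stmt_4 (r : ℕ) (hr : 3 ≤ r) (m : Fin r → ℕ) (hm : ∀ i, 2 ≤ m i)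
    (Θ : ℚ) (hΘ : Θ = -2 + ∑ i, (1 - 1 / (m i : ℚ))) (hΘpos : 0 < Θ)
    (t : ℕ) (ht : t = 2 ∨ t = 4 ∨ t = 6)
    (α : ℕ) (hα : 1 ≤ α) (hαdef : (α : ℚ) = (8 - (t : ℚ)) / (4 * Θ))
    (hdvd : ∀ i, m i ∣ 2 * α) :
    ∀ i, m i ≤ 3 * (10 - t) := by
  intro i
  obtain ⟨d, hd⟩ := hdvd i
  have hd1 : 1 ≤ d := Nat.one_le_iff_ne_zero.2 (by rintro rfl; omega)
  have hdq : (2 * α : ℚ) = m i * d := by exact_mod_cast hd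
  have hmi : (m i : ℚ) ≠ 0 := by exact_mod_cast (by linarith [hm i] : m i ≠ 0)
  have hs : (0 : ℚ) ≤ 4 - t / 2 := by rcases ht with rfl | rfl | rfl <;> norm_num
  have hΘM : Θ * (2 * α) = 4 - t / 2 := by
    rw [hαdef]; field_simp [hΘpos.ne']; ring
  set S := ∑ k ∈ univ.erase i, (1 - 1 / (m k : ℚ))
  have key : (d : ℚ) + (4 - t / 2) = m i * d * (S - 1) := by
    rw [← hdq, mul_sum_erase_one_sub_one_div_sub_one, ← hΘ, hΘM, hdq]
    field_simp; ring
  have hS1 : 1 < S := by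
    have : (0 : ℚ) < m i * d * (S - 1) := by rw [← key]; positivity
    linarith [pos_of_mul_pos_right this (by positivity)]
  have hS := seven_div_six_le_sum_one_sub_one_div _ m (fun k _ => hm k)
    (by rw [card_erase_of_mem (mem_univ i), card_univ, Fintype.card_fin]; omega) hS1
  have hbound := le_of_add_eq_mul_mul_sub_one (by exact_mod_cast hd1) hs hS key
  rcases ht with rfl | rfl | rfl <;> norm_num at hbound ⊢ <;> exact_mod_cast hbound
end

section
/- Let m₁ ≥ m₂ ≥ m₃ ≥ 2 be integers (or more generally r ≥ 3 entries with m₁ maximal) such that Θ := -2 + Σᵢ(1 - 1/m_i) > 0 and at most one m_i equals 2 when r = 3. Then Θ + 1/m₁ ≥ 1/6. -/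
/-
Writing `Θ + 1/m_{i₀} = (r - 2) - Σ_{i ≠ i₀} 1/mᵢ`, each of the `r - 1` remaining terms is at most
`1/2`, which already gives `(r - 3)/2 ≥ 1/2` when `r ≥ 4`. When `r = 3` one of the two remaining
`mᵢ` is at least `3`, so their reciprocals sum to at most `1/2 + 1/3 = 5/6`.
-/

open Finset

variable {ι : Type*} {m : ι → ℕ} {s : Finset ι}

lemma one_div_cast_le_one_div {a b : ℕ} (hb : 0 < b) (h : b ≤ a) :
    1 / (a : ℚ) ≤ 1 / (b : ℚ) :=
  one_div_le_one_div_of_le (by exact_mod_cast hb) (by exact_mod_cast h)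

lemma sum_one_div_le_card_div_two (hm : ∀ i ∈ s, 2 ≤ m i) :
    ∑ i ∈ s, 1 / (m i : ℚ) ≤ #s / 2 := by
  have hle : ∀ i ∈ s, 1 / (m i : ℚ) ≤ 1 / 2 := fun i hi ↦
    mod_cast one_div_cast_le_one_div two_pos (hm i hi)
  simpa [div_eq_mul_one_div (#s : ℚ)] using sum_le_card_nsmul s _ _ hle

lemma sum_one_div_le_card_div_two_sub [DecidableEq ι] (hm : ∀ i ∈ s, 2 ≤ m i) {j : ι}
    (hj : j ∈ s) (hmj : 3 ≤ m j) :
    ∑ i ∈ s, 1 / (m i : ℚ) ≤ #s / 2 - 1 / 6 := by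
  have hrest := sum_one_div_le_card_div_two (s := s.erase j) fun i hi ↦ hm i (mem_of_mem_erase hi)
  have hmj' : 1 / (m j : ℚ) ≤ 1 / 3 := mod_cast one_div_cast_le_one_div three_pos hmj
  rw [← add_sum_erase s _ hj]
  rw [card_erase_of_mem hj, Nat.cast_sub (card_pos.mpr ⟨j, hj⟩)] at hrest
  push_cast at hrest
  linarith

lemma neg_two_add_sum_one_sub_one_div_add [Fintype ι] [DecidableEq ι] (i₀ : ι) :
    -2 + ∑ i, (1 - 1 / (m i : ℚ)) + 1 / (m i₀ : ℚ) =
      Fintype.card ι - 2 - ∑ i ∈ univ.erase i₀, 1 / (m i : ℚ) := by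
  rw [sum_erase_eq_sub (mem_univ i₀), sum_sub_distrib]
  simp only [sum_const, card_univ, nsmul_eq_mul, mul_one]
  ring

theorem stmt_6_general (r : ℕ) (hr : 3 ≤ r) (m : Fin r → ℕ) (hm : ∀ i, 2 ≤ m i)
    (i₀ : Fin r)
    (Θ : ℚ) (hΘ : Θ = -2 + ∑ i, (1 - 1 / (m i : ℚ)))
    (h3 : r = 3 → ∀ i j, m i = 2 → m j = 2 → i = j) :
    (1 : ℚ) / 6 ≤ Θ + 1 / (m i₀ : ℚ) := by
  have hcard : (#(univ.erase i₀) : ℚ) = r - 1 := by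
    rw [card_erase_of_mem (mem_univ i₀), card_univ, Fintype.card_fin,
      Nat.cast_sub (by omega : 1 ≤ r), Nat.cast_one]
  rw [hΘ, neg_two_add_sum_one_sub_one_div_add, Fintype.card_fin]
  rcases hr.eq_or_lt with rfl | h4
  · push_cast at hcard ⊢
    obtain ⟨j, hj, k, hk, hjk⟩ : ∃ j ∈ univ.erase i₀, ∃ k ∈ univ.erase i₀, j ≠ k :=
      one_lt_card.mp (by rw [card_erase_of_mem (mem_univ i₀)]; simp)
    have hbig : 3 ≤ m j ∨ 3 ≤ m k := by
      by_contra!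
      have := hm j
      have := hm k
      exact hjk (h3 rfl j k (by omega) (by omega))
    rcases hbig with hbig | hbig
    · linarith [sum_one_div_le_card_div_two_sub (fun i _ ↦ hm i) hj hbig]
    · linarith [sum_one_div_le_card_div_two_sub (fun i _ ↦ hm i) hk hbig]
  · have h4 : (4 : ℚ) ≤ r := mod_cast h4
    linarith [sum_one_div_le_card_div_two (s := univ.erase i₀) fun i _ ↦ hm i]

/-- If `m₁,…,m_r ≥ 2` (`r ≥ 3`) with `m_{i₀}` maximal, `Θ = -2 + Σ(1-1/mᵢ) > 0`,
and at most one `mᵢ` equals `2` when `r = 3`, then `Θ + 1/m_{i₀} ≥ 1/6`. -/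
theorem stmt_6 (r : ℕ) (hr : 3 ≤ r) (m : Fin r → ℕ) (hm : ∀ i, 2 ≤ m i)
    (i₀ : Fin r) (hmax : ∀ i, m i ≤ m i₀)
    (Θ : ℚ) (hΘ : Θ = -2 + ∑ i, (1 - 1 / (m i : ℚ))) (hΘpos : 0 < Θ)
    (h3 : r = 3 → ∀ i j, m i = 2 → m j = 2 → i = j) :
    (1 : ℚ) / 6 ≤ Θ + 1 / (m i₀ : ℚ) :=
  stmt_6_general r hr m hm i₀ Θ hΘ h3
end
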